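/- arXiv:2010.10606 — 3 statements merged into one kernel-verified Lean document; each statement's English description precedes it below -/
import Mathlib

section
/- Let n, p ≥ 1, let A, 𝒜, 𝒜' be real n×n matrices, C a real p×n matrix, δ, δ' real numbers with (δ, 𝒜) ≠ (δ', 𝒜'), and N a natural number. Suppose the ((N+1)p) × 2n matrix obtained by horizontally concatenating 𝒪_N(δ, 𝒜) and 𝒪_N(δ', 𝒜') has rank 2n. Then (i) 𝒪_N(δ, 𝒜) has rank n, and (ii) for any x₀, x₀' ∈ ℝⁿ, if C(A + δ𝒜)^j x₀ = C(A + δ'𝒜')^j x₀' for every j with 0 ≤ j ≤ N, then x₀ = 0 and x₀' = 0; in particular no pair of nonzero initial states under the two distinct parameter configurations produces the same noise-free output sequence on [0, N]. -/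
open Matrix

/-- The observability matrix `𝒪_N(δ, 𝒜)`: the `((N+1)p) × n` block matrix whose
`j`-th block row is `C (A + δ 𝒜)^j`. -/
noncomputable def obsMat (n p N : ℕ) (A 𝒜 : Matrix (Fin n) (Fin n) ℝ)
    (C : Matrix (Fin p) (Fin n) ℝ) (δ : ℝ) :
    Matrix (Fin (N + 1) × Fin p) (Fin n) ℝ :=
  fun jr c => (C * (A + δ • 𝒜) ^ (jr.1 : ℕ)) jr.2 c

/-! A full column rank concatenation `[M₁ M₂]` has trivial kernel, so `M₁ x₁ = M₂ x₂` forces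
`(x₁, -x₂) = 0`; and `M₁`, being a block of columns of it, has trivial kernel too. -/

namespace Matrix

theorem rank_eq_card_width_iff_mulVec_injective {R m n : Type*} [Field R] [Fintype n]
    (M : Matrix m n R) : M.rank = Fintype.card n ↔ Function.Injective M.mulVec := by
  rw [mulVec_injective_iff, rank_eq_finrank_span_cols, linearIndependent_iff_card_eq_finrank_span,
    Set.finrank, eq_comm]

section FromCols

variable {R m n₁ n₂ : Type*} [Ring R] [Fintype n₁] [Fintype n₂]
  {M₁ : Matrix m n₁ R} {M₂ : Matrix m n₂ R}

theorem eq_zero_of_mulVec_eq_of_injective_fromCols (h : Function.Injective (fromCols M₁ M₂).mulVec)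
    {x₁ : n₁ → R} {x₂ : n₂ → R} (hx : M₁ *ᵥ x₁ = M₂ *ᵥ x₂) : x₁ = 0 ∧ x₂ = 0 := by
  have hker : fromCols M₁ M₂ *ᵥ Sum.elim x₁ (-x₂) = fromCols M₁ M₂ *ᵥ Sum.elim 0 0 := by
    rw [fromCols_mulVec_sumElim, fromCols_mulVec_sumElim, mulVec_neg, hx]
    simp
  simpa [neg_eq_zero] using Sum.elim_eq_iff.1 (h hker)

theorem mulVec_injective_of_injective_fromCols (h : Function.Injective (fromCols M₁ M₂).mulVec) :
    Function.Injective M₁.mulVec := fun x y hxy =>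
  sub_eq_zero.1 (eq_zero_of_mulVec_eq_of_injective_fromCols h (x₂ := 0)
    (by rw [mulVec_sub, hxy, sub_self, mulVec_zero])).1

end FromCols

end Matrix

theorem obsMat_mulVec_apply {n p N : ℕ} (A 𝒜 : Matrix (Fin n) (Fin n) ℝ)
    (C : Matrix (Fin p) (Fin n) ℝ) (δ : ℝ) (x : Fin n → ℝ) (j : Fin (N + 1)) (r : Fin p) :
    (obsMat n p N A 𝒜 C δ *ᵥ x) (j, r) = (C *ᵥ ((A + δ • 𝒜) ^ (j : ℕ) *ᵥ x)) r := by
  rw [mulVec_mulVec]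
  rfl

theorem obsMat_mulVec_eq_of_outputs_eq {n p N : ℕ} {A 𝒜 A' 𝒜' : Matrix (Fin n) (Fin n) ℝ}
    {C : Matrix (Fin p) (Fin n) ℝ} {δ δ' : ℝ} {x x' : Fin n → ℝ}
    (h : ∀ j ≤ N, C *ᵥ ((A + δ • 𝒜) ^ j *ᵥ x) = C *ᵥ ((A' + δ' • 𝒜') ^ j *ᵥ x')) :
    obsMat n p N A 𝒜 C δ *ᵥ x = obsMat n p N A' 𝒜' C δ' *ᵥ x' := by
  ext ⟨j, r⟩
  rw [obsMat_mulVec_apply, obsMat_mulVec_apply, h j (Nat.le_of_lt_succ j.isLt)]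

theorem stmt_0_general (n p N : ℕ)
    (A 𝒜 𝒜' : Matrix (Fin n) (Fin n) ℝ) (C : Matrix (Fin p) (Fin n) ℝ)
    (δ δ' : ℝ)
    (hrank :
      (Matrix.fromCols (obsMat n p N A 𝒜 C δ) (obsMat n p N A 𝒜' C δ')).rank = 2 * n) :
    (obsMat n p N A 𝒜 C δ).rank = n ∧
      ∀ x₀ x₀' : Fin n → ℝ,
        (∀ j : ℕ, j ≤ N →
            C.mulVec (((A + δ • 𝒜) ^ j).mulVec x₀) =
              C.mulVec (((A + δ' • 𝒜') ^ j).mulVec x₀')) →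
          x₀ = 0 ∧ x₀' = 0 := by
  have hinj := (rank_eq_card_width_iff_mulVec_injective
    (fromCols (obsMat n p N A 𝒜 C δ) (obsMat n p N A 𝒜' C δ'))).1 (by simpa [two_mul] using hrank)
  refine ⟨?_, fun x₀ x₀' hout =>
    eq_zero_of_mulVec_eq_of_injective_fromCols hinj (obsMat_mulVec_eq_of_outputs_eq hout)⟩
  simpa using (rank_eq_card_width_iff_mulVec_injective _).2
    (mulVec_injective_of_injective_fromCols hinj)

theorem stmt_0 (n p N : ℕ) (hn : 1 ≤ n) (hp : 1 ≤ p)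
    (A 𝒜 𝒜' : Matrix (Fin n) (Fin n) ℝ) (C : Matrix (Fin p) (Fin n) ℝ)
    (δ δ' : ℝ) (hne : (δ, 𝒜) ≠ (δ', 𝒜'))
    (hrank :
      (Matrix.fromCols (obsMat n p N A 𝒜 C δ) (obsMat n p N A 𝒜' C δ')).rank = 2 * n) :
    (obsMat n p N A 𝒜 C δ).rank = n ∧
      ∀ x₀ x₀' : Fin n → ℝ,
        (∀ j : ℕ, j ≤ N →
            C.mulVec (((A + δ • 𝒜) ^ j).mulVec x₀) =
              C.mulVec (((A + δ' • 𝒜') ^ j).mulVec x₀')) →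
          x₀ = 0 ∧ x₀' = 0 :=
  stmt_0_general n p N A 𝒜 𝒜' C δ δ' hrank
end

section
/- Let n, p ≥ 1, let A, 𝒜, 𝒜' be real n×n matrices, C a real p×n matrix, δ, δ' real numbers, and N a natural number. Suppose the ((N+1)p) × 2n matrix obtained by horizontally concatenating 𝒪_N(δ, 𝒜) and 𝒪_N(δ', 𝒜') has rank strictly less than 2n. Then there exist x₀, x₀' ∈ ℝⁿ, not both zero, such that C(A + δ𝒜)^j x₀ = C(A + δ'𝒜')^j x₀' for every j with 0 ≤ j ≤ N; i.e., the two configurations are indistinguishable from the noise-free output sequence on [0, N]. -/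
open Matrix

/-!
A rank deficit of `[𝒪_N(δ, 𝒜) | 𝒪_N(δ', 𝒜')]` means, by rank–nullity, a nonzero
kernel vector `(x₀, -x₀')`. Reading `𝒪_N(δ, 𝒜) x₀ = 𝒪_N(δ', 𝒜') x₀'` block row by
block row gives equal outputs at every time `j ≤ N`.
-/

namespace Matrix

variable {K m n₁ n₂ : Type*} [Field K] [Fintype n₁] [Fintype n₂]

theorem exists_ne_zero_mulVec_eq_zero_of_rank_lt (M : Matrix m n₁ K)
    (h : M.rank < Fintype.card n₁) : ∃ v ≠ 0, M *ᵥ v = 0 := by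
  have hker : LinearMap.ker M.mulVecLin ≠ ⊥ := by
    intro hbot
    have hrn := M.mulVecLin.finrank_range_add_finrank_ker
    rw [hbot, finrank_bot, add_zero, Module.finrank_fintype_fun_eq_card] at hrn
    exact h.ne hrn
  obtain ⟨v, hv, hv0⟩ := Submodule.exists_mem_ne_zero_of_ne_bot hker
  exact ⟨v, hv0, hv⟩

theorem exists_fromCols_mulVec_eq_of_rank_lt (M₁ : Matrix m n₁ K) (M₂ : Matrix m n₂ K)
    (h : (fromCols M₁ M₂).rank < Fintype.card n₁ + Fintype.card n₂) :
    ∃ x y, (x ≠ 0 ∨ y ≠ 0) ∧ M₁ *ᵥ x = M₂ *ᵥ y := by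
  obtain ⟨v, hv0, hv⟩ :=
    (fromCols M₁ M₂).exists_ne_zero_mulVec_eq_zero_of_rank_lt (by simpa using h)
  refine ⟨v ∘ Sum.inl, -(v ∘ Sum.inr), ?_, ?_⟩
  · by_contra! hxy
    exact hv0 <| funext fun
      | .inl i => congrFun hxy.1 i
      | .inr i => by simpa using congrFun hxy.2 i
  · rw [fromCols_mulVec] at hv
    rw [mulVec_neg]
    exact eq_neg_of_add_eq_zero_left hv

end Matrix

theorem stmt_1_general (n p N : ℕ)
    (A 𝒜 𝒜' : Matrix (Fin n) (Fin n) ℝ) (C : Matrix (Fin p) (Fin n) ℝ)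
    (δ δ' : ℝ)
    (hrank :
      (Matrix.fromCols (obsMat n p N A 𝒜 C δ) (obsMat n p N A 𝒜' C δ')).rank < 2 * n) :
    ∃ x₀ x₀' : Fin n → ℝ, (x₀ ≠ 0 ∨ x₀' ≠ 0) ∧
      ∀ j : ℕ, j ≤ N →
        C.mulVec (((A + δ • 𝒜) ^ j).mulVec x₀) =
          C.mulVec (((A + δ' • 𝒜') ^ j).mulVec x₀') := by
  obtain ⟨x₀, x₀', hne, hobs⟩ :=
    exists_fromCols_mulVec_eq_of_rank_lt (obsMat n p N A 𝒜 C δ) (obsMat n p N A 𝒜' C δ')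
      (by simpa [two_mul] using hrank)
  refine ⟨x₀, x₀', hne, fun j hj => funext fun r => ?_⟩
  have hrow := congrFun hobs (⟨j, Nat.lt_succ_of_le hj⟩, r)
  rwa [obsMat_mulVec_apply, obsMat_mulVec_apply] at hrow

theorem stmt_1 (n p N : ℕ) (hn : 1 ≤ n) (hp : 1 ≤ p)
    (A 𝒜 𝒜' : Matrix (Fin n) (Fin n) ℝ) (C : Matrix (Fin p) (Fin n) ℝ)
    (δ δ' : ℝ)
    (hrank :
      (Matrix.fromCols (obsMat n p N A 𝒜 C δ) (obsMat n p N A 𝒜' C δ')).rank < 2 * n) :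
    ∃ x₀ x₀' : Fin n → ℝ, (x₀ ≠ 0 ∨ x₀' ≠ 0) ∧
      ∀ j : ℕ, j ≤ N →
        C.mulVec (((A + δ • 𝒜) ^ j).mulVec x₀) =
          C.mulVec (((A + δ' • 𝒜') ^ j).mulVec x₀') :=
  stmt_1_general n p N A 𝒜 𝒜' C δ δ' hrank
end

section
/- Let n, p ≥ 1, let A, 𝒜, 𝒜* be real n×n matrices, C a real p×n matrix, δ, δ* real numbers with (δ, 𝒜) ≠ (δ*, 𝒜*), and N a natural number. Suppose the ((N+1)p) × 2n matrix obtained by horizontally concatenating 𝒪_N(δ*, 𝒜*) and 𝒪_N(δ, 𝒜) has rank 2n, and let Y* = 𝒪_N(δ*, 𝒜*) x₀* for some x₀* ∈ ℝⁿ with x₀* ≠ 0. Then Y* does not lie in the column space of 𝒪_N(δ, 𝒜): there exists no x₀ ∈ ℝⁿ with Y* = 𝒪_N(δ, 𝒜) x₀. Consequently, among candidate parameter configurations satisfying the pairwise rank condition, only the true one (δ*, 𝒜*) is consistent with the noise-free output stack generated by a nonzero initial state. -/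
open Matrix

/-! If `𝒪_N(δ, 𝒜) x₀ = 𝒪_N(δ*, 𝒜*) x₀*`, then `(x₀*, -x₀)` lies in the kernel of the
concatenated matrix `[𝒪_N(δ*, 𝒜*) | 𝒪_N(δ, 𝒜)]`; full column rank `2n` makes this kernel
trivial, so `x₀* = 0`. -/

namespace Matrix

variable {K m n n₁ n₂ : Type*} [Field K]

theorem mulVec_injective_iff_rank_eq_card [Fintype n] {M : Matrix m n K} :
    Function.Injective M.mulVec ↔ M.rank = Fintype.card n := by
  rw [mulVec_injective_iff, linearIndependent_iff_card_eq_finrank_span, Set.finrank,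
    ← rank_eq_finrank_span_cols, eq_comm]

theorem eq_zero_of_mulVec_eq_of_injective_fromCols_s3 [Fintype n₁] [Fintype n₂]
    {A₁ : Matrix m n₁ K} {A₂ : Matrix m n₂ K} (h : Function.Injective (fromCols A₁ A₂).mulVec)
    {v₁ : n₁ → K} {v₂ : n₂ → K} (hv : A₁ *ᵥ v₁ = A₂ *ᵥ v₂) : v₁ = 0 ∧ v₂ = 0 := by
  have hker : Sum.elim v₁ (-v₂) = 0 :=
    h <| by rw [fromCols_mulVec_sumElim, mulVec_neg, hv, add_neg_cancel, mulVec_zero]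
  exact ⟨funext fun i => congrFun hker (Sum.inl i),
    neg_eq_zero.mp <| funext fun i => congrFun hker (Sum.inr i)⟩

end Matrix

theorem stmt_3_general (n p N : ℕ)
    (A 𝒜 𝒜s : Matrix (Fin n) (Fin n) ℝ) (C : Matrix (Fin p) (Fin n) ℝ)
    (δ δs : ℝ)
    (hrank :
      (Matrix.fromCols (obsMat n p N A 𝒜s C δs) (obsMat n p N A 𝒜 C δ)).rank = 2 * n)
    (x₀s : Fin n → ℝ) (hx : x₀s ≠ 0)
    (Y : Fin (N + 1) × Fin p → ℝ) (hY : Y = (obsMat n p N A 𝒜s C δs).mulVec x₀s) :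
    ¬ ∃ x₀ : Fin n → ℝ, Y = (obsMat n p N A 𝒜 C δ).mulVec x₀ := by
  rintro ⟨x₀, hx₀⟩
  have hinj : Function.Injective
      (Matrix.fromCols (obsMat n p N A 𝒜s C δs) (obsMat n p N A 𝒜 C δ)).mulVec := by
    rw [mulVec_injective_iff_rank_eq_card, hrank, Fintype.card_sum, Fintype.card_fin, two_mul]
  exact hx (eq_zero_of_mulVec_eq_of_injective_fromCols_s3 hinj (hY.symm.trans hx₀)).1

theorem stmt_3 (n p N : ℕ) (hn : 1 ≤ n) (hp : 1 ≤ p)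
    (A 𝒜 𝒜s : Matrix (Fin n) (Fin n) ℝ) (C : Matrix (Fin p) (Fin n) ℝ)
    (δ δs : ℝ) (hne : (δ, 𝒜) ≠ (δs, 𝒜s))
    (hrank :
      (Matrix.fromCols (obsMat n p N A 𝒜s C δs) (obsMat n p N A 𝒜 C δ)).rank = 2 * n)
    (x₀s : Fin n → ℝ) (hx : x₀s ≠ 0)
    (Y : Fin (N + 1) × Fin p → ℝ) (hY : Y = (obsMat n p N A 𝒜s C δs).mulVec x₀s) :
    ¬ ∃ x₀ : Fin n → ℝ, Y = (obsMat n p N A 𝒜 C δ).mulVec x₀ :=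
  stmt_3_general n p N A 𝒜 𝒜s C δ δs hrank x₀s hx Y hY
end
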